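/- Let S ≤ M n be an isotropic submodule such that the set S^⊥ω \ S is nonempty with minimum Pauli weight d. Then the set Ĉ(S)^⊥ \ Ĉ(S) of binary vectors in (Fin n → Fin 4 → ZMod 2) is nonempty and its minimum Hamming weight equals 2d. (This is the distance-doubling part of the Corollary: concatenating an [[n,k,d]] stabilizer code with the [[4,2,2]] code yields a [[4n, 2k, 2d]] self-dual CSS code.) -/

import Mathlib

/-- Binary symplectic representation of `n`-qubit Pauli operators (up to phase). -/
abbrev M (n : ℕ) : Type := Fin n → ZMod 2 × ZMod 2

/-- The symplectic form: two Paulis commute iff it vanishes. -/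
def symp {n : ℕ} (u v : M n) : ZMod 2 :=
  ∑ j, ((u j).1 * (v j).2 + (u j).2 * (v j).1)

/-- The inner `[[4,2,2]]` encoding of one qubit-pair symplectic entry. -/
def Emap (p : ZMod 2 × ZMod 2) : Fin 4 → ZMod 2 := ![p.1 + p.2, p.1, p.2, 0]

/-- Blockwise `[[4,2,2]]` encoding. -/
def Ehat {n : ℕ} (v : M n) : Fin n → Fin 4 → ZMod 2 := fun j => Emap (v j)

/-- The indicator vector of block `j` (the inner `XXXX`/`ZZZZ` stabilizer). -/
def beta {n : ℕ} (j : Fin n) : Fin n → Fin 4 → ZMod 2 :=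
  fun j' _ => if j' = j then 1 else 0

/-- The concatenated binary code `Ĉ(S)`. -/
def Chat {n : ℕ} (S : Submodule (ZMod 2) (M n)) :
    Submodule (ZMod 2) (Fin n → Fin 4 → ZMod 2) :=
  Submodule.span (ZMod 2) (Set.range (beta (n := n)) ∪ Ehat '' (S : Set (M n)))

/-- The standard dot product on the concatenated space. -/
def dotB {n : ℕ} (w w' : Fin n → Fin 4 → ZMod 2) : ZMod 2 :=
  ∑ j, ∑ i, w j i * w' j i

/-- The (Pauli) weight: the number of qubits on which `v` acts nontrivially. -/
def wt {n : ℕ} (v : M n) : ℕ := (Finset.univ.filter fun j => v j ≠ 0).card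

/-- The Hamming weight on the concatenated space. -/
def wtB {n : ℕ} (w : Fin n → Fin 4 → ZMod 2) : ℕ :=
  (Finset.univ.filter fun p : Fin n × Fin 4 => w p.1 p.2 ≠ 0).card

/-! Every vector orthogonal to the block indicators `β_j` has even blocks, and an even block of
length four is `c·1111 + E(p)` for a unique `p`. On such words the dot product is the symplectic
form of the `p`-parts, so `Ĉ(S)^⊥ \ Ĉ(S)` consists exactly of the words `c·1111 + Ê v` with
`v ∈ S^⊥ω \ S`. A block with `v j ≠ 0` has weight `2` whatever `c j` is, while a block with
`v j = 0` has weight `0` or `4`; hence the weight of such a word is at least `2 wt v`, with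
equality for `c = 0`. -/

lemma Emap_add : ∀ p q, Emap (p + q) = Emap p + Emap q := by decide

lemma Emap_smul : ∀ (c : ZMod 2) p, Emap (c • p) = c • Emap p := by decide

lemma sum_add_Emap_mul_add_Emap : ∀ (c c' : ZMod 2) (p q : ZMod 2 × ZMod 2),
    ∑ i, (c + Emap p i) * (c' + Emap q i) = p.1 * q.2 + p.2 * q.1 := by decide

lemma card_add_Emap_ne_zero : ∀ (c : ZMod 2) p,
    (Finset.univ.filter fun i : Fin 4 => c + Emap p i ≠ 0).card
      = if p = 0 then (if c = 0 then 0 else 4) else 2 := by decide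

lemma eq_add_Emap_of_sum_eq_zero : ∀ b : Fin 4 → ZMod 2, ∑ i, b i = 0 →
    ∀ i, b i = b 3 + Emap (b 1 + b 3, b 2 + b 3) i := by decide

lemma add_Emap_decode : ∀ (c : ZMod 2) (p : ZMod 2 × ZMod 2),
    ((c + Emap p 1) + (c + Emap p 3), (c + Emap p 2) + (c + Emap p 3)) = p := by decide

def blockConst {n : ℕ} (c : Fin n → ZMod 2) : Fin n → Fin 4 → ZMod 2 := fun j _ => c j

def ehatLinearMap (n : ℕ) : M n →ₗ[ZMod 2] Fin n → Fin 4 → ZMod 2 where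
  toFun := Ehat
  map_add' u v := funext fun j => Emap_add (u j) (v j)
  map_smul' c u := funext fun j => Emap_smul c (u j)

def decode {n : ℕ} (w : Fin n → Fin 4 → ZMod 2) : M n :=
  fun j => (w j 1 + w j 3, w j 2 + w j 3)

section

variable {n : ℕ}

lemma sum_smul_beta (c : Fin n → ZMod 2) : ∑ j, c j • beta j = blockConst c := by
  funext j i
  simp [beta, blockConst, Finset.sum_apply]

lemma mem_Chat_iff {S : Submodule (ZMod 2) (M n)} {w : Fin n → Fin 4 → ZMod 2} :
    w ∈ Chat S ↔ ∃ c, ∃ v ∈ S, w = blockConst c + Ehat v := by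
  have hE : Ehat '' (S : Set (M n)) = ehatLinearMap n '' S := rfl
  simp only [Chat, Submodule.span_union, Submodule.mem_sup,
    Submodule.mem_span_range_iff_exists_fun, sum_smul_beta, hE, Submodule.span_image,
    Submodule.span_eq, Submodule.mem_map]
  constructor
  · rintro ⟨_, ⟨c, rfl⟩, _, ⟨v, hv, rfl⟩, rfl⟩
    exact ⟨c, v, hv, rfl⟩
  · rintro ⟨c, v, hv, rfl⟩
    exact ⟨_, ⟨c, rfl⟩, _, ⟨v, hv, rfl⟩, rfl⟩

lemma decode_blockConst_add_Ehat (c : Fin n → ZMod 2) (v : M n) :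
    decode (blockConst c + Ehat v) = v :=
  funext fun j => add_Emap_decode (c j) (v j)

lemma dotB_blockConst_add_Ehat (c c' : Fin n → ZMod 2) (v v' : M n) :
    dotB (blockConst c + Ehat v) (blockConst c' + Ehat v') = symp v v' :=
  Finset.sum_congr rfl fun j _ => sum_add_Emap_mul_add_Emap (c j) (c' j) (v j) (v' j)

lemma dotB_beta (w : Fin n → Fin 4 → ZMod 2) (j : Fin n) : dotB w (beta j) = ∑ i, w j i := by
  simp [dotB, beta]

lemma eq_blockConst_add_Ehat_decode {w : Fin n → Fin 4 → ZMod 2}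
    (hw : ∀ j, dotB w (beta j) = 0) : w = blockConst (fun j => w j 3) + Ehat (decode w) :=
  funext fun j => funext <| eq_add_Emap_of_sum_eq_zero (w j) (dotB_beta w j ▸ hw j)

lemma wtB_blockConst_add_Ehat (c : Fin n → ZMod 2) (v : M n) :
    wtB (blockConst c + Ehat v) = ∑ j, if v j = 0 then (if c j = 0 then 0 else 4) else 2 := by
  rw [wtB, Finset.card_filter, Fintype.sum_prod_type]
  refine Finset.sum_congr rfl fun j _ => ?_
  rw [← card_add_Emap_ne_zero (c j) (v j), Finset.card_filter]
  rfl

lemma wt_eq_sum (v : M n) : wt v = ∑ j, if v j = 0 then 0 else 1 := by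
  simp only [wt, Finset.card_filter, ne_eq, ite_not]

lemma two_mul_wt_le_wtB (c : Fin n → ZMod 2) (v : M n) :
    2 * wt v ≤ wtB (blockConst c + Ehat v) := by
  rw [wtB_blockConst_add_Ehat, wt_eq_sum, Finset.mul_sum]
  gcongr with j
  split_ifs <;> omega

lemma wtB_Ehat (v : M n) : wtB (Ehat v) = 2 * wt v := by
  have h := wtB_blockConst_add_Ehat 0 v
  rw [show blockConst (0 : Fin n → ZMod 2) = 0 from rfl, zero_add] at h
  rw [h, wt_eq_sum, Finset.mul_sum]
  exact Finset.sum_congr rfl fun j _ => by simp [mul_ite]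

variable {S : Submodule (ZMod 2) (M n)}

lemma blockConst_add_Ehat_mem_Chat_iff {c : Fin n → ZMod 2} {v : M n} :
    blockConst c + Ehat v ∈ Chat S ↔ v ∈ S := by
  refine ⟨fun h => ?_, fun hv => mem_Chat_iff.2 ⟨c, v, hv, rfl⟩⟩
  obtain ⟨c', s, hs, hcs⟩ := mem_Chat_iff.1 h
  have hvs := congrArg decode hcs
  rw [decode_blockConst_add_Ehat, decode_blockConst_add_Ehat] at hvs
  exact hvs ▸ hs

lemma forall_dotB_blockConst_add_Ehat_iff {c : Fin n → ZMod 2} {v : M n} :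
    (∀ x ∈ Chat S, dotB (blockConst c + Ehat v) x = 0) ↔ ∀ s ∈ S, symp v s = 0 := by
  constructor
  · intro h s hs
    rw [← dotB_blockConst_add_Ehat c 0 v s]
    exact h _ (blockConst_add_Ehat_mem_Chat_iff.2 hs)
  · intro h x hx
    obtain ⟨c', s, hs, rfl⟩ := mem_Chat_iff.1 hx
    rw [dotB_blockConst_add_Ehat]
    exact h s hs

lemma mem_dual_diff_Chat_iff {w : Fin n → Fin 4 → ZMod 2} :
    ((∀ x ∈ Chat S, dotB w x = 0) ∧ w ∉ Chat S) ↔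
      ∃ c v, ((∀ s ∈ S, symp v s = 0) ∧ v ∉ S) ∧ w = blockConst c + Ehat v := by
  constructor
  · rintro ⟨hdual, hw⟩
    have hdec := eq_blockConst_add_Ehat_decode fun j =>
      hdual _ (Submodule.subset_span (.inl ⟨j, rfl⟩))
    rw [hdec, forall_dotB_blockConst_add_Ehat_iff] at hdual
    rw [hdec, blockConst_add_Ehat_mem_Chat_iff] at hw
    exact ⟨_, _, ⟨hdual, hw⟩, hdec⟩
  · rintro ⟨c, v, hv, rfl⟩
    rwa [forall_dotB_blockConst_add_Ehat_iff, blockConst_add_Ehat_mem_Chat_iff]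

lemma Ehat_mem_dual_diff_Chat {v : M n} (hv : (∀ s ∈ S, symp v s = 0) ∧ v ∉ S) :
    (∀ x ∈ Chat S, dotB (Ehat v) x = 0) ∧ Ehat v ∉ Chat S :=
  mem_dual_diff_Chat_iff.2 ⟨0, v, hv, (zero_add _).symm⟩

end

theorem stmt6_general (n : ℕ) (S : Submodule (ZMod 2) (M n)) (d : ℕ)
    (hne : ({v : M n | (∀ s ∈ S, symp v s = 0) ∧ v ∉ S}).Nonempty)
    (hd : sInf (wt '' {v : M n | (∀ s ∈ S, symp v s = 0) ∧ v ∉ S}) = d) :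
    ({w : Fin n → Fin 4 → ZMod 2 | (∀ c ∈ Chat S, dotB w c = 0) ∧ w ∉ Chat S}).Nonempty ∧
    sInf (wtB '' {w : Fin n → Fin 4 → ZMod 2 | (∀ c ∈ Chat S, dotB w c = 0) ∧ w ∉ Chat S})
      = 2 * d := by
  obtain ⟨v₀, hv₀⟩ := hne
  refine ⟨⟨_, Ehat_mem_dual_diff_Chat hv₀⟩, le_antisymm ?_ ?_⟩
  · obtain ⟨v, hv, hwt⟩ := Nat.sInf_mem (Set.nonempty_of_mem hv₀ |>.image wt)
    exact Nat.sInf_le ⟨Ehat v, Ehat_mem_dual_diff_Chat hv, by rw [wtB_Ehat, hwt, hd]⟩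
  · refine le_csInf ⟨_, _, Ehat_mem_dual_diff_Chat hv₀, rfl⟩ ?_
    rintro _ ⟨w, hw, rfl⟩
    obtain ⟨c, v, hv, rfl⟩ := mem_dual_diff_Chat_iff.1 hw
    have hdv : d ≤ wt v := hd ▸ Nat.sInf_le ⟨v, hv, rfl⟩
    exact (Nat.mul_le_mul_left 2 hdv).trans (two_mul_wt_le_wtB c v)

theorem stmt6 (n : ℕ) (S : Submodule (ZMod 2) (M n))
    (hS : ∀ u ∈ S, ∀ v ∈ S, symp u v = 0) (d : ℕ)
    (hne : ({v : M n | (∀ s ∈ S, symp v s = 0) ∧ v ∉ S}).Nonempty)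
    (hd : sInf (wt '' {v : M n | (∀ s ∈ S, symp v s = 0) ∧ v ∉ S}) = d) :
    ({w : Fin n → Fin 4 → ZMod 2 | (∀ c ∈ Chat S, dotB w c = 0) ∧ w ∉ Chat S}).Nonempty ∧
    sInf (wtB '' {w : Fin n → Fin 4 → ZMod 2 | (∀ c ∈ Chat S, dotB w c = 0) ∧ w ∉ Chat S})
      = 2 * d :=
  stmt6_general n S d hne hd
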